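/- arXiv:2509.11538 — 3 statements merged into one kernel-verified Lean document; each statement's English description precedes it below -/
import Mathlib

section
/- Let n ≥ 1 and let M be an n×n real matrix with nonnegative entries that is irreducible. Then the spectral radius ρ(M) is strictly positive, ρ(M) is an eigenvalue of M, and there exists a row vector p with all entries strictly positive such that p·M = ρ(M)·p (i.e., p is a positive left eigenvector of M associated with the eigenvalue ρ(M)). -/
/-!
A sum of powers of `M` is a positive matrix `N` commuting with `M`. Maximize the Collatz–Wielandt
function `x ↦ minᵢ (x M)ᵢ / xᵢ` over the compact set of positive vectors `x N`, `x` in the standard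
simplex: at a maximizer `p` with value `r` we have `r p ≤ p M`, and were this not an equality,
multiplying the nonzero nonnegative defect by `N` would make `r (p N) < (p N) M` in every
coordinate, so `p N` (rescaled into the set) would beat `p`. Finally, for a complex eigenpair
`M v = μ v`, pairing `|μ| |v| ≤ M |v|` with `p` gives `|μ| (p ⬝ |v|) ≤ r (p ⬝ |v|)`, so `r` is the
spectral radius.
-/

open Matrix

/-- Spectral radius of a real square matrix: the supremum (here: maximum) of the
absolute values of its complex eigenvalues. -/
noncomputable def specRad {n : ℕ} (M : Matrix (Fin n) (Fin n) ℝ) : ℝ :=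
  sSup ((‖·‖ : ℂ → ℝ) '' spectrum ℂ (M.map (Complex.ofReal ·)))

/-- A nonnegative matrix is irreducible if for every pair of indices `(i, j)`
there is a positive power `k` with `(M ^ k) i j > 0`. -/
def MatIrreducible {n : ℕ} (M : Matrix (Fin n) (Fin n) ℝ) : Prop :=
  ∀ i j : Fin n, ∃ k : ℕ, 0 < k ∧ 0 < (M ^ k) i j

open Finset

theorem Pi.ne_zero_of_forall_pos {ι : Type*} [Nonempty ι] {x : ι → ℝ} (hx : ∀ i, 0 < x i) :
    x ≠ 0 :=
  Function.ne_iff.2 ⟨Classical.arbitrary ι, (hx _).ne'⟩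

section Fintype

variable {ι : Type*} [Fintype ι]

theorem dotProduct_pos_of_pos_of_nonneg {u v : ι → ℝ} (hu : ∀ i, 0 < u i) (hv : 0 ≤ v)
    (hv0 : v ≠ 0) : 0 < u ⬝ᵥ v := by
  obtain ⟨i, hi⟩ := Function.ne_iff.1 hv0
  exact sum_pos' (fun j _ => mul_nonneg (hu j).le (hv j))
    ⟨i, mem_univ i, mul_pos (hu i) ((hv i).lt_of_ne' hi)⟩

theorem inv_sum_smul_mem_stdSimplex {x : ι → ℝ} (hx : 0 ≤ x) (hsum : 0 < ∑ i, x i) :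
    (∑ i, x i)⁻¹ • x ∈ stdSimplex ℝ ι :=
  ⟨fun i => mul_nonneg (inv_nonneg.2 hsum.le) (hx i), by simp [← mul_sum, hsum.ne']⟩

end Fintype

namespace Matrix

variable {ι : Type*} [Fintype ι]

theorem vecMul_pos_of_pos {N : Matrix ι ι ℝ} (hN : ∀ i j, 0 < N i j) {y : ι → ℝ} (hy : 0 ≤ y)
    (hy0 : y ≠ 0) (j : ι) : 0 < (y ᵥ* N) j := by
  rw [vecMul, dotProduct_comm]
  exact dotProduct_pos_of_pos_of_nonneg (fun i => hN i j) hy hy0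

theorem exists_pos_commute_of_exists_pow_pos [DecidableEq ι] {M : Matrix ι ι ℝ}
    (hM : ∀ i j, 0 ≤ M i j) (hirr : ∀ i j, ∃ k, 0 < (M ^ k) i j) :
    ∃ N : Matrix ι ι ℝ, (∀ i j, 0 < N i j) ∧ Commute M N := by
  choose k hk using hirr
  refine ⟨∑ ij : ι × ι, M ^ k ij.1 ij.2, fun i j => ?_,
    Commute.sum_right _ _ _ fun ij _ => Commute.self_pow M _⟩
  rw [sum_apply]
  exact (hk i j).trans_le
    (single_le_sum (fun ij _ => pow_apply_nonneg hM (k ij.1 ij.2) i j) (mem_univ (i, j)))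

section CollatzWielandt

variable [Nonempty ι]

noncomputable def collatzWielandt (M : Matrix ι ι ℝ) (x : ι → ℝ) : ℝ :=
  univ.inf' univ_nonempty fun i => (x ᵥ* M) i / x i

variable {M : Matrix ι ι ℝ} {x : ι → ℝ} {r : ℝ}

theorem le_collatzWielandt_iff (hx : ∀ i, 0 < x i) :
    r ≤ collatzWielandt M x ↔ r • x ≤ x ᵥ* M := by
  simp only [collatzWielandt, le_inf'_iff, mem_univ, true_implies, le_div_iff₀ (hx _),
    Pi.le_def, Pi.smul_apply, smul_eq_mul]

theorem lt_collatzWielandt_iff (hx : ∀ i, 0 < x i) :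
    r < collatzWielandt M x ↔ ∀ i, r * x i < (x ᵥ* M) i := by
  simp only [collatzWielandt, lt_inf'_iff, mem_univ, true_implies, lt_div_iff₀ (hx _)]

theorem collatzWielandt_smul {c : ℝ} (hc : c ≠ 0) :
    collatzWielandt M (c • x) = collatzWielandt M x := by
  simp only [collatzWielandt, smul_vecMul, Pi.smul_apply, smul_eq_mul, mul_div_mul_left _ _ hc]

theorem continuousOn_collatzWielandt :
    ContinuousOn (collatzWielandt M) {x | ∀ i, x i ≠ 0} := by
  refine ContinuousOn.finset_inf'_apply _ fun i _ => ContinuousOn.div ?_ ?_ fun x hx => hx i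
  · exact ((continuous_apply i).comp (continuous_id.matrix_vecMul continuous_const)).continuousOn
  · exact (continuous_apply i).continuousOn

theorem exists_pos_vecMul_eq_smul_of_commute {N : Matrix ι ι ℝ} (hN : ∀ i j, 0 < N i j)
    (hMN : Commute M N) : ∃ r : ℝ, ∃ p : ι → ℝ, (∀ i, 0 < p i) ∧ p ᵥ* M = r • p := by
  classical
  have hpos : ∀ x ∈ stdSimplex ℝ ι, ∀ j, 0 < (x ᵥ* N) j := fun x hx =>
    vecMul_pos_of_pos hN hx.1 fun h => by simpa [h] using hx.2
  obtain ⟨x₀, hx₀, hmax⟩ := (isCompact_stdSimplex ℝ ι).exists_isMaxOn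
    ⟨_, single_mem_stdSimplex ℝ (Classical.arbitrary ι)⟩
    ((continuousOn_collatzWielandt (M := M)).comp
      (continuous_id.matrix_vecMul continuous_const).continuousOn fun x hx i => (hpos x hx i).ne')
  set p := x₀ ᵥ* N
  have hp : ∀ i, 0 < p i := hpos x₀ hx₀
  set r := collatzWielandt M p
  refine ⟨r, p, hp, ?_⟩
  by_contra hne
  have hle : r • p ≤ p ᵥ* M := (le_collatzWielandt_iff hp).1 le_rfl
  have hpN : ∀ i, 0 < (p ᵥ* N) i :=
    vecMul_pos_of_pos hN (fun i => (hp i).le) (Pi.ne_zero_of_forall_pos hp)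
  have hincrease : r < collatzWielandt M (p ᵥ* N) := (lt_collatzWielandt_iff hpN).2 fun j => by
    have h := vecMul_pos_of_pos hN (sub_nonneg.2 hle) (sub_ne_zero.2 hne) j
    rw [sub_vecMul, smul_vecMul, vecMul_vecMul, hMN.eq, ← vecMul_vecMul] at h
    simpa using h
  have hsum : 0 < ∑ i, p i := sum_pos (fun i _ => hp i) univ_nonempty
  have hmaximal : collatzWielandt M (p ᵥ* N) ≤ r := by
    calc collatzWielandt M (p ᵥ* N) = collatzWielandt M (((∑ i, p i)⁻¹ • p) ᵥ* N) := by
          rw [smul_vecMul, collatzWielandt_smul (inv_ne_zero hsum.ne')]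
      _ ≤ r := hmax (inv_sum_smul_mem_stdSimplex (fun i => (hp i).le) hsum)
  exact hincrease.not_ge hmaximal

end CollatzWielandt

theorem pos_of_vecMul_eq_smul {M : Matrix ι ι ℝ} (hM : ∀ i j, 0 ≤ M i j) (hM0 : M ≠ 0)
    {p : ι → ℝ} (hp : ∀ i, 0 < p i) {r : ℝ} (hpM : p ᵥ* M = r • p) : 0 < r := by
  obtain ⟨a, b, hab⟩ : ∃ a b, M a b ≠ 0 := by
    by_contra! h
    exact hM0 (ext h)
  have h : 0 < (p ᵥ* M) b :=
    dotProduct_pos_of_pos_of_nonneg hp (fun i => hM i b) (Function.ne_iff.2 ⟨a, hab⟩)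
  rw [hpM, Pi.smul_apply, smul_eq_mul] at h
  exact pos_of_mul_pos_left h (hp b).le

theorem norm_le_of_vecMul_le_smul {M : Matrix ι ι ℝ} (hM : ∀ i j, 0 ≤ M i j) {p : ι → ℝ}
    (hp : ∀ i, 0 < p i) {r : ℝ} (hpM : p ᵥ* M ≤ r • p) {μ : ℂ} {v : ι → ℂ} (hv : v ≠ 0)
    (hMv : M.map (↑) *ᵥ v = μ • v) : ‖μ‖ ≤ r := by
  set w : ι → ℝ := fun i => ‖v i‖
  have hw : 0 ≤ w := fun i => norm_nonneg _
  have hMw : ‖μ‖ • w ≤ M *ᵥ w := fun i => by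
    calc ‖μ‖ * ‖v i‖ = ‖∑ j, (M i j : ℂ) * v j‖ := by
          rw [← norm_mul, ← smul_eq_mul, ← Pi.smul_apply, ← hMv]; rfl
      _ ≤ ∑ j, ‖(M i j : ℂ) * v j‖ := norm_sum_le _ _
      _ = (M *ᵥ w) i := by simp [w, mulVec, dotProduct, abs_of_nonneg (hM _ _)]
  have hpw : 0 < p ⬝ᵥ w :=
    dotProduct_pos_of_pos_of_nonneg hp hw fun h =>
      hv (funext fun i => norm_eq_zero.1 (congr_fun h i))
  have key : ‖μ‖ * (p ⬝ᵥ w) ≤ r * (p ⬝ᵥ w) :=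
    calc ‖μ‖ * (p ⬝ᵥ w) = p ⬝ᵥ (‖μ‖ • w) := by rw [dotProduct_smul, smul_eq_mul]
      _ ≤ p ⬝ᵥ (M *ᵥ w) := dotProduct_le_dotProduct_of_nonneg_left hMw fun i => (hp i).le
      _ = (p ᵥ* M) ⬝ᵥ w := dotProduct_mulVec _ _ _
      _ ≤ (r • p) ⬝ᵥ w := dotProduct_le_dotProduct_of_nonneg_right hpM hw
      _ = r * (p ⬝ᵥ w) := by rw [smul_dotProduct, smul_eq_mul]
  exact le_of_mul_le_mul_right key hpw

section Spectrum

variable [DecidableEq ι] {K : Type*} [Field K] {A : Matrix ι ι K} {μ : K}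

theorem mem_spectrum_of_vecMul_eq_smul {v : ι → K} (hv : v ≠ 0) (h : v ᵥ* A = μ • v) :
    μ ∈ spectrum K A := by
  rw [mem_spectrum_iff_isRoot_charpoly, ← charpoly_transpose, ← mem_spectrum_iff_isRoot_charpoly,
    ← spectrum_toLin', ← Module.End.hasEigenvalue_iff_mem_spectrum]
  exact Module.End.hasEigenvalue_of_hasEigenvector
    ⟨Module.End.mem_eigenspace_iff.2 (by rwa [toLin'_apply, mulVec_transpose]), hv⟩

theorem exists_mulVec_eq_smul_of_mem_spectrum (h : μ ∈ spectrum K A) :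
    ∃ v ≠ 0, A *ᵥ v = μ • v := by
  rw [← spectrum_toLin', ← Module.End.hasEigenvalue_iff_mem_spectrum] at h
  obtain ⟨v, hv, hv0⟩ := h.exists_hasEigenvector
  exact ⟨v, hv0, Module.End.mem_eigenspace_iff.1 hv⟩

theorem map_mem_spectrum_map_iff {L : Type*} [Field L] (f : K →+* L) :
    f μ ∈ spectrum L (A.map f) ↔ μ ∈ spectrum K A := by
  rw [mem_spectrum_iff_isRoot_charpoly, mem_spectrum_iff_isRoot_charpoly, charpoly_map,
    Polynomial.isRoot_map_iff f.injective]

end Spectrum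

end Matrix

theorem specRad_eq_of_vecMul_eq_smul {n : ℕ} [NeZero n] {M : Matrix (Fin n) (Fin n) ℝ}
    (hM : ∀ i j, 0 ≤ M i j) {p : Fin n → ℝ} (hp : ∀ i, 0 < p i) {r : ℝ} (hr : 0 ≤ r)
    (hpM : p ᵥ* M = r • p) : specRad M = r := by
  refine IsGreatest.csSup_eq ⟨⟨r, ?_, by simp [hr]⟩, ?_⟩
  · exact (map_mem_spectrum_map_iff Complex.ofRealHom).2
      (mem_spectrum_of_vecMul_eq_smul (Pi.ne_zero_of_forall_pos hp) hpM)
  · rintro _ ⟨μ, hμ, rfl⟩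
    obtain ⟨v, hv, hMv⟩ := exists_mulVec_eq_smul_of_mem_spectrum hμ
    exact norm_le_of_vecMul_le_smul hM hp hpM.le hv hMv

/-- Perron–Frobenius: for an irreducible nonnegative matrix the
spectral radius is positive, is an eigenvalue, and admits a strictly positive
left eigenvector. -/
theorem stmt_0 {n : ℕ} (hn : 1 ≤ n) (M : Matrix (Fin n) (Fin n) ℝ)
    (hM : ∀ i j, 0 ≤ M i j) (hirr : MatIrreducible M) :
    0 < specRad M ∧ specRad M ∈ spectrum ℝ M ∧
      ∃ p : Fin n → ℝ, (∀ i, 0 < p i) ∧ p ᵥ* M = specRad M • p := by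
  have : NeZero n := ⟨by omega⟩
  obtain ⟨N, hN, hMN⟩ :=
    exists_pos_commute_of_exists_pow_pos hM fun i j => (hirr i j).imp fun _ => And.right
  obtain ⟨r, p, hp, hpM⟩ := exists_pos_vecMul_eq_smul_of_commute hN hMN
  have hM0 : M ≠ 0 := by
    obtain ⟨k, hk, hMk⟩ := hirr 0 0
    rintro rfl
    simp [zero_pow hk.ne'] at hMk
  have hr : 0 < r := pos_of_vecMul_eq_smul hM hM0 hp hpM
  rw [specRad_eq_of_vecMul_eq_smul hM hp hr.le hpM]
  exact ⟨hr, mem_spectrum_of_vecMul_eq_smul (Pi.ne_zero_of_forall_pos hp) hpM, p, hp, hpM⟩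
end

section
/- (Theorem 4.1: Monotonically increasing profit-rate path.) Let T > 0 and β > 0. Let λ, G, k : ℝ → ℝ satisfy: for every t ∈ [0, T], λ(t) > 0, G(t) < 0, k(t) > 0, and λ has derivative G(t)·(1 - β·k(t)) at t; and k is continuous on [0, T]. Let k_max = sup { k(t) : t ∈ [0, T] } and suppose β·k_max < 1 (i.e., β < β_min = 1/k_max). Define r(t) = 1/λ(t) - 1. Then r is strictly monotonically increasing on [0, T]: for all 0 ≤ s < t ≤ T, r(s) < r(t). -/
/-!
Since `β k ≤ β k_max < 1` on `[0, T]`, the derivative `G (1 - β k)` of `λ` is the product of a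
negative and a positive factor, so `λ` is strictly decreasing there; as `λ > 0`, the profit rate
`1 / λ - 1` is strictly increasing.
-/

open Set

lemma mul_lt_of_mul_sSup_image_lt {s : Set ℝ} {k : ℝ → ℝ} {β c : ℝ} (hs : IsCompact s)
    (hk : ContinuousOn k s) (hβ : 0 ≤ β) (h : β * sSup (k '' s) < c) {t : ℝ} (ht : t ∈ s) :
    β * k t < c :=
  calc β * k t ≤ β * sSup (k '' s) :=
        mul_le_mul_of_nonneg_left (le_csSup (hs.image_of_continuousOn hk).bddAbove
          (mem_image_of_mem k ht)) hβ
    _ < c := h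

lemma StrictAntiOn.strictMonoOn_one_div_sub_one {s : Set ℝ} {f : ℝ → ℝ} (hf : StrictAntiOn f s)
    (hpos : ∀ t ∈ s, 0 < f t) : StrictMonoOn (fun t ↦ 1 / f t - 1) s := fun _ ha _ hb hab ↦
  sub_lt_sub_right (one_div_lt_one_div_of_lt (hpos _ hb) (hf ha hb hab)) 1

theorem stmt_11_general (T β : ℝ) (hβ : 0 < β) (lam G k : ℝ → ℝ)
    (hdyn : ∀ t ∈ Set.Icc (0 : ℝ) T,
      0 < lam t ∧ G t < 0 ∧ 0 < k t ∧
        HasDerivAt lam (G t * (1 - β * k t)) t)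
    (hk : ContinuousOn k (Set.Icc (0 : ℝ) T))
    (hmax : β * sSup (k '' Set.Icc (0 : ℝ) T) < 1) :
    ∀ s ∈ Set.Icc (0 : ℝ) T, ∀ t ∈ Set.Icc (0 : ℝ) T, s < t →
      1 / lam s - 1 < 1 / lam t - 1 := by
  have hderiv_neg : ∀ t ∈ Icc 0 T, G t * (1 - β * k t) < 0 := fun t ht ↦
    mul_neg_of_neg_of_pos (hdyn t ht).2.1
      (sub_pos.2 (mul_lt_of_mul_sSup_image_lt isCompact_Icc hk hβ.le hmax ht))
  have hanti : StrictAntiOn lam (Icc 0 T) :=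
    strictAntiOn_of_hasDerivWithinAt_neg (convex_Icc 0 T)
      (HasDerivAt.continuousOn fun t ht ↦ (hdyn t ht).2.2.2)
      (fun t ht ↦ (hdyn t (interior_subset ht)).2.2.2.hasDerivWithinAt)
      (fun t ht ↦ hderiv_neg t (interior_subset ht))
  exact fun s hs t ht hst ↦
    hanti.strictMonoOn_one_div_sub_one (fun t ht ↦ (hdyn t ht).1) hs ht hst

/-- Theorem 4.1, monotonically increasing profit-rate path:
if on `[0, T]` the spectral radius `λ` is positive with derivative
`G(t)·(1 - β·k(t))`, the technology effect satisfies `G < 0`, `k > 0` is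
continuous, and `β · k_max < 1` where `k_max = sup k([0, T])`, then the profit
rate `r(t) = 1/λ(t) - 1` is strictly increasing on `[0, T]`. -/
theorem stmt_11 (T β : ℝ) (hT : 0 < T) (hβ : 0 < β) (lam G k : ℝ → ℝ)
    (hdyn : ∀ t ∈ Set.Icc (0 : ℝ) T,
      0 < lam t ∧ G t < 0 ∧ 0 < k t ∧
        HasDerivAt lam (G t * (1 - β * k t)) t)
    (hk : ContinuousOn k (Set.Icc (0 : ℝ) T))
    (hmax : β * sSup (k '' Set.Icc (0 : ℝ) T) < 1) :
    ∀ s ∈ Set.Icc (0 : ℝ) T, ∀ t ∈ Set.Icc (0 : ℝ) T, s < t →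
      1 / lam s - 1 < 1 / lam t - 1 :=
  stmt_11_general T β hβ lam G k hdyn hk hmax
end

section
/- (Theorem 4.2: Hump-shaped profit-rate path.) Let T > 0 and β > 0. Let λ, G, k : ℝ → ℝ satisfy: for every t ∈ [0, T], λ(t) > 0, G(t) < 0, k(t) > 0, and λ has derivative G(t)·(1 - β·k(t)) at t; suppose k is continuous and strictly increasing on [0, T], and that β·k(0) < 1 < β·k(T) (i.e., β_min < β < β_max). Define r(t) = 1/λ(t) - 1. Then there exists a unique t_c ∈ (0, T) with β·k(t_c) = 1, and r is strictly increasing on [0, t_c] and strictly decreasing on [t_c, T]. -/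
/-!
Since `k` is continuous and strictly increasing, `β·k` crosses the level `1` exactly once, at
`t_c`. The derivative `G·(1 - β·k)` of `λ` is then negative before `t_c` and positive after it
(because `G < 0`), so `λ` falls and then rises, and `r = 1/λ - 1` does the opposite.
-/

open Set

section Crossing

variable {α δ : Type*} [ConditionallyCompleteLinearOrder α] [TopologicalSpace α]
  [OrderTopology α] [DenselyOrdered α] [LinearOrder δ] [TopologicalSpace δ]
  [OrderClosedTopology δ]

theorem StrictMonoOn.exists_unique_mem_Ioo_eq {f : α → δ} {a b : α} {c : δ}
    (hfm : StrictMonoOn f (Icc a b)) (hab : a ≤ b) (hf : ContinuousOn f (Icc a b))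
    (ha : f a < c) (hb : c < f b) :
    ∃ x ∈ Ioo a b, f x = c ∧ ∀ y ∈ Ioo a b, f y = c → y = x := by
  obtain ⟨x, hx, hfx⟩ := intermediate_value_Ioo hab hf ⟨ha, hb⟩
  refine ⟨x, hx, hfx, fun y hy hfy => ?_⟩
  exact hfm.injOn (Ioo_subset_Icc_self hy) (Ioo_subset_Icc_self hx) (hfy.trans hfx.symm)

end Crossing

section OneDivSubOne

variable {α 𝕜 : Type*} [Preorder α] [Field 𝕜] [LinearOrder 𝕜] [IsStrictOrderedRing 𝕜]
  {f : α → 𝕜} {s : Set α}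

theorem StrictAntiOn.one_div_sub_one (hf : StrictAntiOn f s) (hpos : ∀ x ∈ s, 0 < f x) :
    StrictMonoOn (fun x => 1 / f x - 1) s := fun _ _ y hy hxy =>
  sub_lt_sub_right (one_div_lt_one_div_of_lt (hpos y hy) (hf ‹_› hy hxy)) 1

theorem StrictMonoOn.one_div_sub_one (hf : StrictMonoOn f s) (hpos : ∀ x ∈ s, 0 < f x) :
    StrictAntiOn (fun x => 1 / f x - 1) s := fun x hx _ hy hxy =>
  sub_lt_sub_right (one_div_lt_one_div_of_lt (hpos x hx) (hf hx hy hxy)) 1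

end OneDivSubOne

section DerivSign

variable {f f' : ℝ → ℝ} {a b : ℝ}

theorem strictAntiOn_Icc_of_hasDerivAt_neg (hf : ∀ x ∈ Icc a b, HasDerivAt f (f' x) x)
    (hf' : ∀ x ∈ Ioo a b, f' x < 0) : StrictAntiOn f (Icc a b) :=
  strictAntiOn_of_hasDerivWithinAt_neg (convex_Icc a b)
    (fun x hx => (hf x hx).continuousAt.continuousWithinAt)
    (fun x hx => (hf x (interior_subset hx)).hasDerivWithinAt)
    (by rwa [interior_Icc])

theorem strictMonoOn_Icc_of_hasDerivAt_pos (hf : ∀ x ∈ Icc a b, HasDerivAt f (f' x) x)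
    (hf' : ∀ x ∈ Ioo a b, 0 < f' x) : StrictMonoOn f (Icc a b) :=
  strictMonoOn_of_hasDerivWithinAt_pos (convex_Icc a b)
    (fun x hx => (hf x hx).continuousAt.continuousWithinAt)
    (fun x hx => (hf x (interior_subset hx)).hasDerivWithinAt)
    (by rwa [interior_Icc])

end DerivSign

/-- Theorem 4.2, hump-shaped profit-rate path: if on `[0, T]`
the spectral radius `λ` is positive with derivative `G(t)·(1 - β·k(t))`, the
technology effect satisfies `G < 0`, `k > 0` is continuous and strictly
increasing, and `β·k(0) < 1 < β·k(T)`, then there is a unique turning point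
`t_c ∈ (0, T)` with `β·k(t_c) = 1`, and the profit rate `r(t) = 1/λ(t) - 1` is
strictly increasing on `[0, t_c]` and strictly decreasing on `[t_c, T]`. -/
theorem stmt_12 (T β : ℝ) (hT : 0 < T) (hβ : 0 < β) (lam G k : ℝ → ℝ)
    (hdyn : ∀ t ∈ Set.Icc (0 : ℝ) T,
      0 < lam t ∧ G t < 0 ∧ 0 < k t ∧
        HasDerivAt lam (G t * (1 - β * k t)) t)
    (hkc : ContinuousOn k (Set.Icc (0 : ℝ) T))
    (hkm : StrictMonoOn k (Set.Icc (0 : ℝ) T))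
    (h0 : β * k 0 < 1) (hTc : 1 < β * k T) :
    ∃ tc ∈ Set.Ioo (0 : ℝ) T,
      β * k tc = 1 ∧
      (∀ t ∈ Set.Ioo (0 : ℝ) T, β * k t = 1 → t = tc) ∧
      StrictMonoOn (fun t => 1 / lam t - 1) (Set.Icc (0 : ℝ) tc) ∧
      StrictAntiOn (fun t => 1 / lam t - 1) (Set.Icc tc T) := by
  have hβkm : StrictMonoOn (fun t => β * k t) (Icc 0 T) := fun _ hx _ hy hxy =>
    mul_lt_mul_of_pos_left (hkm hx hy hxy) hβ
  obtain ⟨tc, htc, hktc, huniq⟩ :=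
    hβkm.exists_unique_mem_Ioo_eq hT.le (continuousOn_const.mul hkc) h0 hTc
  have hleft : Icc 0 tc ⊆ Icc 0 T := Icc_subset_Icc_right htc.2.le
  have hright : Icc tc T ⊆ Icc 0 T := Icc_subset_Icc_left htc.1.le
  have htcI : tc ∈ Icc 0 T := Ioo_subset_Icc_self htc
  refine ⟨tc, htc, hktc, huniq, ?_, ?_⟩
  · refine StrictAntiOn.one_div_sub_one ?_ fun t ht => (hdyn t (hleft ht)).1
    refine strictAntiOn_Icc_of_hasDerivAt_neg (fun t ht => (hdyn t (hleft ht)).2.2.2)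
      fun t ht => mul_neg_of_neg_of_pos (hdyn t (hleft (Ioo_subset_Icc_self ht))).2.1
        (sub_pos.2 (hktc ▸ hβkm (hleft (Ioo_subset_Icc_self ht)) htcI ht.2))
  · refine StrictMonoOn.one_div_sub_one ?_ fun t ht => (hdyn t (hright ht)).1
    refine strictMonoOn_Icc_of_hasDerivAt_pos (fun t ht => (hdyn t (hright ht)).2.2.2)
      fun t ht => mul_pos_of_neg_of_neg (hdyn t (hright (Ioo_subset_Icc_self ht))).2.1
        (sub_neg.2 (hktc ▸ hβkm htcI (hright (Ioo_subset_Icc_self ht)) ht.1))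
end
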